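/- Suppose M_r ∈ ℝ^{ρ_r×p} satisfies (1−δ)‖z‖₂² ≤ (p/ρ_r)‖M_r z‖₂² ≤ (1+δ)‖z‖₂² for all z ∈ span(P_{k_r}), with δ ∈ (0,1). Assume λ_{k_r+1} > 0 and γ'_r > 0. Let Ū ∈ ℝ^{p×k} have all columns in span(P_{k_r}), let Ẽ^u ∈ ℝ^{ρ_r×k}, and set Ũ = M_r Ū + Ẽ^u. Let U* be a minimizer over U ∈ ℝ^{p×k} of ‖M_r U − Ũ‖_F² + γ'_r tr(U^⊤ L_r U), and set Ū* = P_{k_r} P_{k_r}^⊤ U*, E* = U* − Ū*. Then ‖E*‖_F ≤ √(2/(γ'_r λ_{k_r+1})) ‖Ẽ^u‖_F + √(2 λ_{k_r}/λ_{k_r+1}) ‖Ū‖_F. -/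

import Mathlib

open Matrix

/-- Frobenius norm of a real matrix. -/
noncomputable def frobNorm {m n : Type*} [Fintype m] [Fintype n] (A : Matrix m n ℝ) : ℝ :=
  Real.sqrt (∑ i, ∑ j, (A i j) ^ 2)

/-- Euclidean norm of a real vector. -/
noncomputable def vecNorm {n : Type*} [Fintype n] (x : n → ℝ) : ℝ :=
  Real.sqrt (∑ i, (x i) ^ 2)

/-- A row-selection matrix: its rows are distinct standard basis vectors of `ℝ^p`. -/
def IsRowSelection {ρ p : ℕ} (M : Matrix (Fin ρ) (Fin p) ℝ) : Prop :=
  ∃ f : Fin ρ → Fin p, Function.Injective f ∧ ∀ i j, M i j = if j = f i then 1 else 0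

/-- A column-selection matrix: its columns are distinct standard basis vectors of `ℝ^n`. -/
def IsColSelection {n ρ : ℕ} (M : Matrix (Fin n) (Fin ρ) ℝ) : Prop :=
  ∃ f : Fin ρ → Fin n, Function.Injective f ∧ ∀ i j, M i j = if i = f j then 1 else 0

/-- `y` lies in the span of the columns of `P`. -/
def inColSpan {p k : ℕ} (P : Matrix (Fin p) (Fin k) ℝ) (y : Fin p → ℝ) : Prop :=
  ∃ c : Fin k → ℝ, y = P.mulVec c

/-- `Y ∈ LR(P, Q)`: every column of `Y` lies in the column span of `P` and every row of `Y`
lies in the column span of `Q`. -/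
def memLR {p n kr kc : ℕ} (P : Matrix (Fin p) (Fin kr) ℝ) (Q : Matrix (Fin n) (Fin kc) ℝ)
    (Y : Matrix (Fin p) (Fin n) ℝ) : Prop :=
  (∀ j, inColSpan P (fun i => Y i j)) ∧ (∀ i, inColSpan Q (fun j => Y i j))

/-- Graph cumulative coherence `ν = max_i √n ‖Q^⊤ e_i‖₂`. -/
noncomputable def coherence {n k : ℕ} (Q : Matrix (Fin n) (Fin k) ℝ) : ℝ :=
  ⨆ i : Fin n, Real.sqrt n * vecNorm (fun j => Q i j)

/-! In the eigenbasis `P` one has `tr(Uᵀ L U) = ∑ᵢ λᵢ ‖(Pᵀ U)ᵢ‖²`, and `U - P_{k_r} P_{k_r}ᵀ U`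
keeps exactly the coordinates `i ≥ k_r` of `Pᵀ U`. Hence `λ_{k_r+1} ‖E*‖² ≤ tr(U*ᵀ L U*)` and
`tr(Ūᵀ L Ū) ≤ λ_{k_r} ‖Ū‖²`. Comparing the objective at `U*` with its value at `Ū`, where the
data term is `‖Ẽ^u‖²`, gives `γ λ_{k_r+1} ‖E*‖² ≤ ‖Ẽ^u‖² + γ λ_{k_r} ‖Ū‖²`. -/

open Finset

lemma Real.le_sqrt_mul_add_sqrt_mul_of_sq_le {e a b c d : ℝ} (ha : 0 ≤ a) (hb : 0 ≤ b)
    (h : e ^ 2 ≤ c * a ^ 2 + d * b ^ 2) : e ≤ √c * a + √d * b := by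
  have hc : c ≤ √c ^ 2 := Real.sq_sqrt' ▸ le_max_left c 0
  have hd : d ≤ √d ^ 2 := Real.sq_sqrt' ▸ le_max_left d 0
  refine le_of_sq_le_sq ?_ (by positivity)
  nlinarith [mul_le_mul_of_nonneg_right hc (sq_nonneg a),
    mul_le_mul_of_nonneg_right hd (sq_nonneg b),
    mul_nonneg (mul_nonneg (Real.sqrt_nonneg c) ha) (mul_nonneg (Real.sqrt_nonneg d) hb)]

lemma Real.le_sqrt_two_div_mul_add_sqrt_mul_of_mul_sq_le {e a b γ l₀ l₁ : ℝ} (hγ : 0 < γ)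
    (hl₀ : 0 ≤ l₀) (hl₁ : 0 < l₁) (ha : 0 ≤ a) (hb : 0 ≤ b)
    (h : γ * l₁ * e ^ 2 ≤ a ^ 2 + γ * l₀ * b ^ 2) :
    e ≤ √(2 / (γ * l₁)) * a + √(2 * l₀ / l₁) * b := by
  refine Real.le_sqrt_mul_add_sqrt_mul_of_sq_le ha hb ?_
  rw [div_mul_eq_mul_div, div_mul_eq_mul_div, div_add_div _ _ (by positivity) hl₁.ne',
    le_div_iff₀ (by positivity)]
  nlinarith [mul_nonneg (mul_nonneg hγ.le hl₀) (sq_nonneg b), sq_nonneg a]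

namespace Matrix

variable {n m ι : Type*} [Fintype n] [Fintype m]

lemma frobNorm_sq (A : Matrix n m ℝ) : frobNorm A ^ 2 = ∑ i, ∑ j, A i j ^ 2 :=
  Real.sq_sqrt (by positivity)

lemma frobNorm_nonneg (A : Matrix n m ℝ) : 0 ≤ frobNorm A :=
  Real.sqrt_nonneg _

lemma frobNorm_neg (A : Matrix n m ℝ) : frobNorm (-A) = frobNorm A := by
  simp [frobNorm]

lemma frobNorm_eq_sqrt_trace (A : Matrix n m ℝ) : frobNorm A = √(trace (Aᵀ * A)) := by
  rw [frobNorm, trace, Finset.sum_comm]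
  simp [mul_apply, sq]

variable [DecidableEq n] {P L : Matrix n n ℝ} {ev : n → ℝ}

lemma frobNorm_transpose_mul (hP : P * Pᵀ = 1) (U : Matrix n m ℝ) :
    frobNorm (Pᵀ * U) = frobNorm U := by
  simp only [frobNorm_eq_sqrt_trace, transpose_mul, transpose_transpose, Matrix.mul_assoc,
    ← Matrix.mul_assoc P, hP, Matrix.one_mul]

lemma trace_transpose_mul_diagonal_mul (d : n → ℝ) (V : Matrix n m ℝ) :
    trace (Vᵀ * diagonal d * V) = ∑ i, d i * ∑ j, V i j ^ 2 := by
  simp only [trace, diag, mul_apply, transpose_apply, diagonal_apply, mul_ite, mul_zero,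
    Finset.sum_ite_eq', Finset.mem_univ, if_true, Finset.mul_sum]
  rw [Finset.sum_comm]
  exact Finset.sum_congr rfl fun i _ => Finset.sum_congr rfl fun j _ => by ring

lemma trace_transpose_mul_mul_eq_sum (hP : P * Pᵀ = 1) (hLP : L * P = P * diagonal ev)
    (U : Matrix n m ℝ) :
    trace (Uᵀ * L * U) = ∑ i, ev i * ∑ j, (Pᵀ * U) i j ^ 2 := by
  have hL : L = P * diagonal ev * Pᵀ := by
    rw [← hLP, Matrix.mul_assoc, hP, Matrix.mul_one]
  rw [← trace_transpose_mul_diagonal_mul, hL, transpose_mul, transpose_transpose]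
  simp only [Matrix.mul_assoc]

lemma PosSemidef.nonneg_of_mul_eq_mul_diagonal (hL : L.PosSemidef) (hP : Pᵀ * P = 1)
    (hLP : L * P = P * diagonal ev) (i : n) : 0 ≤ ev i := by
  have h := hL.conjTranspose_mul_mul_same P
  rw [conjTranspose_eq_transpose_of_trivial, Matrix.mul_assoc, hLP, ← Matrix.mul_assoc, hP,
    Matrix.one_mul] at h
  exact posSemidef_diagonal_iff.mp h i

def spectralProj (P : Matrix n n ℝ) (s : Finset n) : Matrix n n ℝ :=
  P * diagonal (fun i => if i ∈ s then 1 else 0) * Pᵀ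

lemma submatrix_mul_transpose_submatrix_eq_spectralProj [Fintype ι] (P : Matrix n n ℝ)
    (e : ι ↪ n) : P.submatrix id e * (P.submatrix id e)ᵀ = spectralProj P (univ.map e) := by
  ext a b
  simp only [spectralProj, mul_apply, diagonal_apply, transpose_apply, submatrix_apply, id,
    mul_ite, mul_zero, Finset.sum_ite_eq', Finset.mem_univ, if_true, mul_one, ite_mul, zero_mul,
    Finset.sum_ite_mem, Finset.univ_inter, Finset.sum_map]

omit [Fintype m] in
lemma transpose_mul_sub_spectralProj_mul (hP : Pᵀ * P = 1) (s : Finset n) (U : Matrix n m ℝ)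
    (i : n) (j : m) :
    (Pᵀ * (U - spectralProj P s * U)) i j = if i ∈ s then 0 else (Pᵀ * U) i j := by
  simp only [spectralProj, Matrix.mul_sub, ← Matrix.mul_assoc, hP, Matrix.one_mul]
  rw [Matrix.mul_assoc, sub_apply, diagonal_mul]
  split_ifs <;> simp

omit [Fintype m] in
lemma transpose_mul_eq_zero_of_forall_eq_mulVec [Fintype ι] (hP : Pᵀ * P = 1) (e : ι ↪ n)
    {U : Matrix n m ℝ} (hU : ∀ j, ∃ c : ι → ℝ, (fun i => U i j) = P.submatrix id e *ᵥ c)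
    (i : n) (hi : i ∉ univ.map e) (j : m) : (Pᵀ * U) i j = 0 := by
  obtain ⟨c, hc⟩ := hU j
  change (Pᵀ *ᵥ fun i => U i j) i = 0
  rw [hc, mulVec_mulVec, ← submatrix_id_id Pᵀ, ← submatrix_mul _ _ _ _ _ Function.bijective_id,
    hP]
  refine Finset.sum_eq_zero fun l _ => ?_
  simp only [submatrix_apply, id, one_apply]
  rw [if_neg, zero_mul]
  rintro rfl
  exact hi (Finset.mem_map_of_mem e (Finset.mem_univ l))

lemma mul_frobNorm_sub_spectralProj_mul_sq_le_trace (hP : Pᵀ * P = 1)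
    (hLP : L * P = P * diagonal ev) {s : Finset n} (hs : ∀ i ∈ s, 0 ≤ ev i) {μ : ℝ}
    (hμ : ∀ i ∉ s, μ ≤ ev i) (U : Matrix n m ℝ) :
    μ * frobNorm (U - spectralProj P s * U) ^ 2 ≤ trace (Uᵀ * L * U) := by
  have hP' : P * Pᵀ = 1 := mul_eq_one_comm.mp hP
  rw [← frobNorm_transpose_mul hP', frobNorm_sq, trace_transpose_mul_mul_eq_sum hP' hLP,
    Finset.mul_sum]
  refine Finset.sum_le_sum fun i _ => ?_
  simp only [transpose_mul_sub_spectralProj_mul hP]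
  by_cases hi : i ∈ s
  · simpa [hi] using mul_nonneg (hs i hi) (Finset.sum_nonneg fun j _ => sq_nonneg ((Pᵀ * U) i j))
  · simpa [hi] using mul_le_mul_of_nonneg_right (hμ i hi)
      (Finset.sum_nonneg fun j _ => sq_nonneg ((Pᵀ * U) i j))

lemma trace_le_mul_frobNorm_sq (hP : P * Pᵀ = 1) (hLP : L * P = P * diagonal ev)
    {s : Finset n} {ν : ℝ} (hν : ∀ i ∈ s, ev i ≤ ν) {U : Matrix n m ℝ}
    (hU : ∀ i ∉ s, ∀ j, (Pᵀ * U) i j = 0) :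
    trace (Uᵀ * L * U) ≤ ν * frobNorm U ^ 2 := by
  rw [← frobNorm_transpose_mul hP U, frobNorm_sq, trace_transpose_mul_mul_eq_sum hP hLP,
    Finset.mul_sum]
  refine Finset.sum_le_sum fun i _ => ?_
  by_cases hi : i ∈ s
  · exact mul_le_mul_of_nonneg_right (hν i hi) (Finset.sum_nonneg fun j _ => sq_nonneg _)
  · simp [hU i hi]

end Matrix

lemma Fin.mem_map_castLEEmb_univ {k p : ℕ} (h : k ≤ p) (i : Fin p) :
    i ∈ univ.map (Fin.castLEEmb h) ↔ (i : ℕ) < k := by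
  constructor
  · intro hi
    obtain ⟨a, -, rfl⟩ := Finset.mem_map.1 hi
    exact a.isLt
  · exact fun hi => Finset.mem_map.2 ⟨⟨i, hi⟩, Finset.mem_univ _, rfl⟩

/-- The 1-indexed eigenvalues `λ_{k_r}`, `λ_{k_r+1}` of `L_r` are `ev ⟨k_r−1⟩`, `ev ⟨k_r⟩`. -/
theorem approximate_decoder_E_bound
    (p ρr kr k : ℕ) (hkr : kr < p)
    (Lr : Matrix (Fin p) (Fin p) ℝ) (hLr : Lr.PosSemidef)
    (ev : Fin p → ℝ) (hev : Monotone ev)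
    (P : Matrix (Fin p) (Fin p) ℝ) (hPorth : Pᵀ * P = 1)
    (hLrP : Lr * P = P * Matrix.diagonal ev)
    (Pkr : Matrix (Fin p) (Fin kr) ℝ) (hPkr : Pkr = P.submatrix id (Fin.castLE hkr.le))
    (Mr : Matrix (Fin ρr) (Fin p) ℝ)
    (hlam1 : 0 < ev ⟨kr, hkr⟩)
    (γr' : ℝ) (hγr' : 0 < γr')
    (Ubar : Matrix (Fin p) (Fin k) ℝ) (hUbar : ∀ j, inColSpan Pkr (fun i => Ubar i j))
    (Eu : Matrix (Fin ρr) (Fin k) ℝ)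
    (Util : Matrix (Fin ρr) (Fin k) ℝ) (hUtil : Util = Mr * Ubar + Eu)
    (Ustar : Matrix (Fin p) (Fin k) ℝ)
    (hmin : ∀ U : Matrix (Fin p) (Fin k) ℝ,
      (frobNorm (Mr * Ustar - Util)) ^ 2 + γr' * Matrix.trace (Ustarᵀ * Lr * Ustar) ≤
      (frobNorm (Mr * U - Util)) ^ 2 + γr' * Matrix.trace (Uᵀ * Lr * U)) :
    frobNorm (Ustar - Pkr * Pkrᵀ * Ustar) ≤
      Real.sqrt (2 / (γr' * ev ⟨kr, hkr⟩)) * frobNorm Eu +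
        Real.sqrt (2 * ev ⟨kr - 1, by omega⟩ / ev ⟨kr, hkr⟩) * frobNorm Ubar := by
  set lam₀ := ev ⟨kr - 1, by omega⟩
  set lam₁ := ev ⟨kr, hkr⟩
  have hPkr' : Pkr = P.submatrix id (Fin.castLEEmb hkr.le) := hPkr
  have hev₀ : ∀ i, 0 ≤ ev i := hLr.nonneg_of_mul_eq_mul_diagonal hPorth hLrP
  have hstar : lam₁ * frobNorm (Ustar - Pkr * Pkrᵀ * Ustar) ^ 2 ≤ trace (Ustarᵀ * Lr * Ustar) := by
    rw [hPkr', submatrix_mul_transpose_submatrix_eq_spectralProj]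
    refine mul_frobNorm_sub_spectralProj_mul_sq_le_trace hPorth hLrP (fun i _ => hev₀ i)
      (fun i hi => hev ?_) Ustar
    rw [Fin.mem_map_castLEEmb_univ] at hi
    exact Fin.le_def.2 (not_lt.1 hi)
  have hbar : trace (Ubarᵀ * Lr * Ubar) ≤ lam₀ * frobNorm Ubar ^ 2 := by
    refine trace_le_mul_frobNorm_sq (mul_eq_one_comm.mp hPorth) hLrP
      (s := univ.map (Fin.castLEEmb hkr.le)) (fun i hi => hev ?_)
      (transpose_mul_eq_zero_of_forall_eq_mulVec hPorth _ (hPkr' ▸ hUbar))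
    rw [Fin.mem_map_castLEEmb_univ] at hi
    exact Fin.le_def.2 (show (i : ℕ) ≤ kr - 1 by omega)
  have hopt : γr' * trace (Ustarᵀ * Lr * Ustar) ≤
      frobNorm Eu ^ 2 + γr' * trace (Ubarᵀ * Lr * Ubar) := by
    have h := hmin Ubar
    rw [hUtil, show Mr * Ubar - (Mr * Ubar + Eu) = -Eu by abel, frobNorm_neg] at h
    linarith [sq_nonneg (frobNorm (Mr * Ustar - (Mr * Ubar + Eu)))]
  have hcomb : γr' * lam₁ * frobNorm (Ustar - Pkr * Pkrᵀ * Ustar) ^ 2 ≤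
      frobNorm Eu ^ 2 + γr' * lam₀ * frobNorm Ubar ^ 2 := by
    linarith [mul_le_mul_of_nonneg_left hstar hγr'.le, mul_le_mul_of_nonneg_left hbar hγr'.le]
  exact Real.le_sqrt_two_div_mul_add_sqrt_mul_of_mul_sq_le hγr' (hev₀ _) hlam1
    (frobNorm_nonneg Eu) (frobNorm_nonneg Ubar) hcomb
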